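/- arXiv:1104.4755 — 2 statements merged into one kernel-verified Lean document; each statement's English description precedes it below -/
import Mathlib

section
/- For each integer r ≥ 1 and each odd integer m ≥ 1, W_{2^r m} ⊆ W_{2^r}. -/
open Polynomial

variable (k : Type*) [Field k] [Fintype k]

/-- `k[x]₀`: the free non-unital associative `k`-algebra on one generator `x`,
identified with the polynomials over `k` with zero constant term,
viewed as a `k`-submodule of `Polynomial k`. -/
noncomputable def A0 : Submodule k (Polynomial k) :=
  LinearMap.ker (Polynomial.aeval (0 : k)).toLinearMap

/-- A `T`-space of `k[x]₀`: a `k`-linear subspace of `k[x]₀` closed under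
substitutions `f ↦ f ∘ g` for `g ∈ k[x]₀`. -/
def IsTSpace (V : Submodule k (Polynomial k)) : Prop :=
  V ≤ A0 k ∧ ∀ f ∈ V, ∀ g ∈ A0 k, f.comp g ∈ V

/-- `H^S`: the smallest `T`-space of `k[x]₀` containing `H`. -/
noncomputable def TSp (H : Set (Polynomial k)) : Submodule k (Polynomial k) :=
  sInf {V | IsTSpace k V ∧ H ⊆ V}

/-- A `T`-ideal of `k[x]₀`: a `T`-space that is also an ideal of `k[x]₀`. -/
def IsTIdeal (V : Submodule k (Polynomial k)) : Prop :=
  IsTSpace k V ∧ ∀ f ∈ V, ∀ g ∈ A0 k, g * f ∈ V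

/-- `H^T`: the smallest `T`-ideal of `k[x]₀` containing `H`. -/
noncomputable def TId (H : Set (Polynomial k)) : Submodule k (Polynomial k) :=
  sInf {V | IsTIdeal k V ∧ H ⊆ V}

/-- `W_n = {x + x^{q^n}}^S + {x^{q^n+1}}^S`, where `q` is the order of `k`. -/
noncomputable def Wn (n : ℕ) : Submodule k (Polynomial k) :=
  TSp k {X + X ^ (Fintype.card k ^ n)} ⊔ TSp k {X ^ (Fintype.card k ^ n + 1)}

/-- `U_n = {x - x^{q^{2n}}}^T`, where `q` is the order of `k`. -/
noncomputable def Un (n : ℕ) : Submodule k (Polynomial k) :=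
  TId k {X - X ^ (Fintype.card k ^ (2 * n))}

section Aux

variable {k}

lemma X_pow_mem_A0 {e : ℕ} (he : 1 ≤ e) : (X : Polynomial k) ^ e ∈ A0 k := by
  simp [A0, LinearMap.mem_ker, zero_pow (by omega : e ≠ 0)]

lemma X_add_X_pow_mem_A0 {e : ℕ} (he : 1 ≤ e) : (X : Polynomial k) + X ^ e ∈ A0 k := by
  simp [A0, LinearMap.mem_ker, zero_pow (by omega : e ≠ 0)]

lemma isTSpace_A0 : IsTSpace k (A0 k) := by
  refine ⟨le_rfl, fun f hf g hg => ?_⟩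
  simp only [A0, LinearMap.mem_ker, AlgHom.toLinearMap_apply] at *
  rw [aeval_comp, hg, hf]

lemma subset_TSp (H : Set (Polynomial k)) : H ⊆ ↑(TSp k H) := by
  intro x hx
  simp only [TSp, SetLike.mem_coe, Submodule.mem_sInf]
  exact fun V hV => hV.2 hx

lemma TSp_le {H : Set (Polynomial k)} {V : Submodule k (Polynomial k)}
    (hV : IsTSpace k V) (hH : H ⊆ V) : TSp k H ≤ V :=
  sInf_le ⟨hV, hH⟩

lemma isTSpace_TSp {H : Set (Polynomial k)} (hH : H ⊆ ↑(A0 k)) : IsTSpace k (TSp k H) := by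
  constructor
  · exact sInf_le (a := A0 k) ⟨isTSpace_A0, hH⟩
  · intro f hf g hg
    simp only [TSp, Submodule.mem_sInf] at hf ⊢
    exact fun V hV => hV.1.2 f (hf V hV) g hg

lemma isTSpace_sup {V W : Submodule k (Polynomial k)} (hV : IsTSpace k V)
    (hW : IsTSpace k W) : IsTSpace k (V ⊔ W) := by
  refine ⟨sup_le hV.1 hW.1, fun f hf g hg => ?_⟩
  rw [Submodule.mem_sup] at hf ⊢
  obtain ⟨v, hv, w, hw, rfl⟩ := hf
  exact ⟨v.comp g, hV.2 v hv g hg, w.comp g, hW.2 w hw g hg, (add_comp).symm⟩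

lemma isTSpace_Wn (n : ℕ) : IsTSpace k (Wn k n) := by
  have hq : 1 ≤ Fintype.card k ^ n := Nat.one_le_pow _ _ Fintype.card_pos
  exact isTSpace_sup
    (isTSpace_TSp (by simpa using X_add_X_pow_mem_A0 hq))
    (isTSpace_TSp (by simpa using X_pow_mem_A0 (by omega)))

/-- `(X^a).comp (X^b) = X^(b*a)`. -/
lemma X_pow_comp_X_pow (a b : ℕ) :
    ((X : Polynomial k) ^ a).comp (X ^ b) = X ^ (b * a) := by
  rw [pow_comp, X_comp, ← pow_mul]

lemma key_A {Q : ℕ} (hQ : 1 ≤ Q) (t : ℕ) :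
    (X : Polynomial k) + X ^ Q ^ (2 * t + 1) ∈ TSp k {X + X ^ Q} := by
  set V := TSp k ({X + X ^ Q} : Set (Polynomial k)) with hV
  have hTV : IsTSpace k V :=
    isTSpace_TSp (by simpa using X_add_X_pow_mem_A0 hQ)
  have hgen : (X : Polynomial k) + X ^ Q ∈ V :=
    subset_TSp _ (Set.mem_singleton _)
  induction t with
  | zero => simpa using hgen
  | succ t ih =>
    -- `(X + X^Q).comp (X^Q) = X^Q + X^{Q^2} ∈ V`
    have h2 : (X : Polynomial k) ^ Q + X ^ (Q * Q) ∈ V := by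
      have := hTV.2 _ hgen (X ^ Q) (X_pow_mem_A0 hQ)
      simpa [add_comp, X_comp, pow_comp, ← pow_mul] using this
    -- `(X + X^{Q^{2t+1}}).comp (X^{Q*Q}) ∈ V`
    have h3 : (X : Polynomial k) ^ (Q * Q) + X ^ (Q * Q * Q ^ (2 * t + 1)) ∈ V := by
      have := hTV.2 _ ih (X ^ (Q * Q)) (X_pow_mem_A0 (Nat.one_le_iff_ne_zero.2 (by positivity)))
      simpa [add_comp, X_comp, pow_comp, ← pow_mul] using this
    have hexp : Q * Q * Q ^ (2 * t + 1) = Q ^ (2 * (t + 1) + 1) := by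
      rw [show 2 * (t + 1) + 1 = (2 * t + 1) + 2 by ring, pow_add]; ring
    rw [← hexp]
    have : (X : Polynomial k) + X ^ (Q * Q * Q ^ (2 * t + 1)) =
        (X + X ^ Q) - (X ^ Q + X ^ (Q * Q)) + (X ^ (Q * Q) + X ^ (Q * Q * Q ^ (2 * t + 1))) := by
      ring
    rw [this]
    exact V.add_mem (V.sub_mem hgen h2) h3

lemma dvd_key {Q : ℕ} (hQ : 1 ≤ Q) (t : ℕ) :
    ∃ d : ℕ, 1 ≤ d ∧ (Q + 1) * d = Q ^ (2 * t + 1) + 1 := by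
  have hdvd : (Q + 1) ∣ Q ^ (2 * t + 1) + 1 := by
    have : ((Q : ℤ) + 1) ∣ (Q : ℤ) ^ (2 * t + 1) + 1 ^ (2 * t + 1) :=
      Odd.add_dvd_pow_add_pow (Q : ℤ) 1 ⟨t, by ring⟩
    have h2 : ((Q : ℤ) + 1) ∣ (Q : ℤ) ^ (2 * t + 1) + 1 := by simpa using this
    exact_mod_cast (by exact_mod_cast h2 : ((Q + 1 : ℕ) : ℤ) ∣ ((Q ^ (2 * t + 1) + 1 : ℕ) : ℤ))
  obtain ⟨d, hd⟩ := hdvd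
  refine ⟨d, ?_, hd.symm⟩
  rcases Nat.eq_zero_or_pos d with rfl | h
  · simp at hd
  · omega

lemma key_B {Q : ℕ} (hQ : 1 ≤ Q) (t : ℕ) :
    (X : Polynomial k) ^ (Q ^ (2 * t + 1) + 1) ∈ TSp k {X ^ (Q + 1)} := by
  have hTV : IsTSpace k (TSp k ({X ^ (Q + 1)} : Set (Polynomial k))) :=
    isTSpace_TSp (by simpa using X_pow_mem_A0 (by omega : 1 ≤ Q + 1))
  have hgen : (X : Polynomial k) ^ (Q + 1) ∈ TSp k ({X ^ (Q + 1)} : Set (Polynomial k)) :=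
    subset_TSp _ (Set.mem_singleton _)
  obtain ⟨d, hd1, hd⟩ := dvd_key hQ t
  have := hTV.2 _ hgen (X ^ d) (X_pow_mem_A0 hd1)
  rw [X_pow_comp_X_pow, mul_comm, hd] at this
  exact this

end Aux

/-- For each `r ≥ 1` and each odd `m ≥ 1`, `W_{2^r m} ⊆ W_{2^r}`. -/
theorem Wn_pow_two_mul_odd_le (r : ℕ) (hr : 1 ≤ r) (m : ℕ) (hm : Odd m) (hm1 : 1 ≤ m) :
    Wn k (2 ^ r * m) ≤ Wn k (2 ^ r) := by
  obtain ⟨t, rfl⟩ := hm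
  set Q := Fintype.card k ^ 2 ^ r with hQdef
  have hQ : 1 ≤ Q := Nat.one_le_pow _ _ Fintype.card_pos
  have hcard : Fintype.card k ^ (2 ^ r * (2 * t + 1)) = Q ^ (2 * t + 1) := by
    rw [hQdef, ← pow_mul]
  refine sup_le ?_ ?_
  · refine TSp_le (isTSpace_Wn _) ?_
    intro x hx
    rcases hx with rfl
    rw [hcard]
    exact le_sup_left (a := TSp k {X + X ^ Q}) (b := TSp k {X ^ (Q + 1)}) (key_A hQ t)
  · refine TSp_le (isTSpace_Wn _) ?_
    intro x hx
    rcases hx with rfl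
    rw [hcard]
    exact le_sup_right (a := TSp k {X + X ^ Q}) (b := TSp k {X ^ (Q + 1)}) (key_B hQ t)
end

section
/- For each n ≥ 1, the set E_n ∪ {(x^{q^{2n}} − x)x^i : i ≥ 0} is a k-linear basis of W_n. -/
open Polynomial

variable (k : Type*) [Field k] [Fintype k]

/-- The set `E_n = {x^{q^n i + j} + x^{i + q^n j} : q^n > i > j ≥ 0} ∪
{x^{(q^n+1) i} : 1 ≤ i ≤ q^n - 1}`. -/
def En (n : ℕ) : Set (Polynomial k) :=
  {f | ∃ i j : ℕ, j < i ∧ i < Fintype.card k ^ n ∧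
      f = X ^ (i * Fintype.card k ^ n + j) + X ^ (i + j * Fintype.card k ^ n)} ∪
  {f | ∃ i : ℕ, 1 ≤ i ∧ i ≤ Fintype.card k ^ n - 1 ∧
      f = X ^ ((Fintype.card k ^ n + 1) * i)}


/-! Write `m = q^n`. Since `g ↦ g^m` is `k`-linear, substituting `g` into the generators gives
`g + g^m` and `g^{m+1}`, and expanding in monomials shows that `W_n` is spanned by the
`x^{am+b} + x^{a+bm}` and `x^{(m+1)a}`. Modulo the elements `x^{m²+c} - x^{c+1}` the exponent
pair `(a + m, b)` may be replaced by `(a, b + 1)`, lowering `a + b`, and `x^{(m+1)(a+m)}` by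
`x^{(m+1)(a+1)}`; so everything reduces to exponent pairs with both entries below `m`, that is,
to `E_n`. The proposed basis elements have pairwise distinct degrees. -/

section TSpace

variable {K : Type*} [Field K]

lemma mem_A0_iff {f : K[X]} : f ∈ A0 K ↔ f.coeff 0 = 0 := by
  simp [A0, coeff_zero_eq_aeval_zero]

lemma X_pow_mem_A0_s5 {i : ℕ} (hi : i ≠ 0) : (X : K[X]) ^ i ∈ A0 K := by
  simp [mem_A0_iff, coeff_X_pow, hi.symm]

lemma X_mem_A0 : (X : K[X]) ∈ A0 K := by
  simp [mem_A0_iff]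

lemma comp_mem_A0 {f g : K[X]} (hf : f ∈ A0 K) (hg : g ∈ A0 K) : f.comp g ∈ A0 K := by
  rw [mem_A0_iff, coeff_zero_eq_eval_zero] at hf hg ⊢
  rw [eval_comp, hg, hf]

lemma A0_eq_span_X_pow :
    A0 K = Submodule.span K (Set.range fun i : ℕ => (X : K[X]) ^ (i + 1)) := by
  refine le_antisymm (fun f hf => ?_) (Submodule.span_le.2 ?_)
  · obtain ⟨g, rfl⟩ := X_dvd_iff.2 (mem_A0_iff.1 hf)
    clear hf
    induction g using Polynomial.induction_on' with
    | add p q hp hq => rw [mul_add]; exact add_mem hp hq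
    | monomial i c =>
      rw [X_mul_monomial, ← smul_X_eq_monomial]
      exact Submodule.smul_mem _ _ (Submodule.subset_span ⟨i, rfl⟩)
  · rintro _ ⟨i, rfl⟩
    exact X_pow_mem_A0_s5 i.succ_ne_zero

lemma map_mem_of_forall_X_pow_mem {M : Type*} [AddCommGroup M] [Module K M] (f : K[X] →ₗ[K] M)
    {V : Submodule K M} (hf : ∀ i, f (X ^ (i + 1)) ∈ V) {g : K[X]} (hg : g ∈ A0 K) :
    f g ∈ V := by
  rw [A0_eq_span_X_pow] at hg
  exact (Submodule.span_le (p := V.comap f)).2 (Set.range_subset_iff.2 hf) hg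

lemma map₂_mem_of_forall_X_pow_mem {M : Type*} [AddCommGroup M] [Module K M]
    (B : K[X] →ₗ[K] K[X] →ₗ[K] M) {V : Submodule K M}
    (hB : ∀ i j, B (X ^ (i + 1)) (X ^ (j + 1)) ∈ V) {g h : K[X]} (hg : g ∈ A0 K)
    (hh : h ∈ A0 K) :
    B g h ∈ V :=
  map_mem_of_forall_X_pow_mem (B.flip h) (fun i => map_mem_of_forall_X_pow_mem _ (hB i) hh) hg

lemma comp_mem_TSp_singleton (f : K[X]) {g : K[X]} (hg : g ∈ A0 K) : f.comp g ∈ TSp K {f} := by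
  rw [TSp, Submodule.mem_sInf]
  rintro V ⟨⟨-, hV⟩, hf⟩
  exact hV f (hf rfl) g hg

lemma TSp_singleton_le {f : K[X]} (hf : f ∈ A0 K) {V : Submodule K K[X]}
    (hV : ∀ g ∈ A0 K, f.comp g ∈ V) : TSp K {f} ≤ V := by
  set S := Submodule.span K (Set.range fun g : A0 K => f.comp g)
  have hS : IsTSpace K S := by
    refine ⟨Submodule.span_le.2 ?_, fun p hp h hh => ?_⟩
    · rintro _ ⟨g, rfl⟩
      exact comp_mem_A0 hf g.2
    · have hcomp : S ≤ S.comap (aeval h).toLinearMap := by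
        refine Submodule.span_le.2 ?_
        rintro _ ⟨g, rfl⟩
        exact Submodule.subset_span ⟨⟨(g : K[X]).comp h, comp_mem_A0 g.2 hh⟩, by
          rw [AlgHom.toLinearMap_apply, ← comp_eq_aeval, comp_assoc]⟩
      simpa [comp_eq_aeval] using hcomp hp
  have hfS : {f} ⊆ (S : Set K[X]) :=
    Set.singleton_subset_iff.2 (Submodule.subset_span ⟨⟨X, X_mem_A0⟩, comp_X⟩)
  calc TSp K {f} ≤ S := sInf_le ⟨hS, hfS⟩
    _ ≤ V := Submodule.span_le.2 (Set.range_subset_iff.2 fun g => hV g g.2)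

end TSpace

lemma FiniteField.frobeniusAlgHom_pow_apply {K R : Type*} [Field K] [Fintype K] [CommRing R]
    [Algebra K R] (n : ℕ) (x : R) : (frobeniusAlgHom K R ^ n) x = x ^ Fintype.card K ^ n := by
  rw [AlgHom.coe_pow, coe_frobeniusAlgHom, pow_iterate]

section SwapPoly

variable {R : Type*} [CommRing R] {m : ℕ}

noncomputable def swapPoly (m a b : ℕ) : R[X] := X ^ (a * m + b) + X ^ (a + b * m)

def basisSet (m : ℕ) : Set R[X] :=
  {f | ∃ i j : ℕ, j < i ∧ i < m ∧ f = swapPoly m i j} ∪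
    {f | ∃ i : ℕ, 1 ≤ i ∧ i ≤ m - 1 ∧ f = X ^ ((m + 1) * i)} ∪
    Set.range fun i : ℕ => X ^ (m * m + i) - X ^ (i + 1)

lemma swapPoly_comm (m a b : ℕ) : (swapPoly m a b : R[X]) = swapPoly m b a := by
  simp only [swapPoly]
  ring_nf

lemma swapPoly_add_left (m a b : ℕ) :
    (swapPoly m (a + m) b : R[X]) =
      swapPoly m a (b + 1) + (X ^ (m * m + (a * m + b)) - X ^ (a * m + b + 1)) := by
  simp only [swapPoly]
  ring_nf

lemma swapPoly_mem_span_basisSet_of_lt {a b : ℕ} (ha : a < m) (hb : b < m) (hab : a + b ≠ 0) :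
    (swapPoly m a b : R[X]) ∈ Submodule.span R (basisSet m) := by
  rcases lt_trichotomy a b with h | rfl | h
  · rw [swapPoly_comm]
    exact Submodule.subset_span (Or.inl (Or.inl ⟨b, a, h, hb, rfl⟩))
  · have hdiag : (X : R[X]) ^ ((m + 1) * a) ∈ Submodule.span R (basisSet m) :=
      Submodule.subset_span (Or.inl (Or.inr ⟨a, by omega, by omega, rfl⟩))
    have e : (swapPoly m a a : R[X]) = X ^ ((m + 1) * a) + X ^ ((m + 1) * a) := by
      simp only [swapPoly]
      ring_nf
    rw [e]
    exact add_mem hdiag hdiag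
  · exact Submodule.subset_span (Or.inl (Or.inl ⟨a, b, h, ha, rfl⟩))

lemma swapPoly_mem_span_basisSet (hm : 2 ≤ m) {a b : ℕ} (hab : a + b ≠ 0) :
    (swapPoly m a b : R[X]) ∈ Submodule.span R (basisSet m) := by
  have hD : ∀ c, (X : R[X]) ^ (m * m + c) - X ^ (c + 1) ∈ Submodule.span R (basisSet m) :=
    fun c => Submodule.subset_span (Or.inr ⟨c, rfl⟩)
  by_cases ha : m ≤ a
  · obtain ⟨a, rfl⟩ : ∃ a', a = a' + m := ⟨a - m, by omega⟩
    rw [swapPoly_add_left]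
    exact add_mem (swapPoly_mem_span_basisSet hm (a := a) (b := b + 1) (by omega)) (hD _)
  by_cases hb : m ≤ b
  · obtain ⟨b, rfl⟩ : ∃ b', b = b' + m := ⟨b - m, by omega⟩
    rw [swapPoly_comm, swapPoly_add_left]
    exact add_mem (swapPoly_mem_span_basisSet hm (a := b) (b := a + 1) (by omega)) (hD _)
  exact swapPoly_mem_span_basisSet_of_lt (by omega) (by omega) hab
termination_by a + b
decreasing_by all_goals omega

lemma X_pow_succ_mul_mem_span_basisSet (hm : 2 ≤ m) {a : ℕ} (ha : a ≠ 0) :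
    (X : R[X]) ^ ((m + 1) * a) ∈ Submodule.span R (basisSet m) := by
  by_cases h : a < m
  · exact Submodule.subset_span (Or.inl (Or.inr ⟨a, by omega, by omega, rfl⟩))
  obtain ⟨a, rfl⟩ : ∃ a', a = a' + m := ⟨a - m, by omega⟩
  have e : (X : R[X]) ^ ((m + 1) * (a + m)) =
      X ^ ((m + 1) * (a + 1)) + (X ^ (m * m + ((m + 1) * a + m)) - X ^ ((m + 1) * a + m + 1)) := by
    ring_nf
  rw [e]
  exact add_mem (X_pow_succ_mul_mem_span_basisSet hm (a := a + 1) (by omega))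
    (Submodule.subset_span (Or.inr ⟨_, rfl⟩))
termination_by a
decreasing_by omega

/-- A polynomial of degree exactly `d` (for `2 ≤ m`), chosen so that every element of
`basisSet m` is of this form. -/
noncomputable def degreeRep (m d : ℕ) : R[X] :=
  if m * m ≤ d then X ^ d - X ^ (d - m * m + 1)
  else if d % m < d / m then swapPoly m (d / m) (d % m) else X ^ d

lemma degreeRep_digits {i j : ℕ} (hi : i < m) (hj : j < m) :
    (degreeRep m (i * m + j) : R[X]) = if j < i then swapPoly m i j else X ^ (i * m + j) := by
  have hlt : i * m + j < m * m := by nlinarith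
  have hmod : (i * m + j) % m = j := by
    rw [Nat.add_comm, Nat.add_mul_mod_self_right, Nat.mod_eq_of_lt hj]
  have hdiv : (i * m + j) / m = i := by
    rw [Nat.add_comm, Nat.add_mul_div_right _ _ (by omega), Nat.div_eq_of_lt hj, zero_add]
  rw [degreeRep, if_neg (by omega), hmod, hdiv]

lemma basisSet_subset_range_degreeRep :
    basisSet m ⊆ Set.range (degreeRep m : ℕ → R[X]) := by
  rintro _ ((⟨i, j, hji, hi, rfl⟩ | ⟨i, hi, hi', rfl⟩) | ⟨i, rfl⟩)
  · exact ⟨i * m + j, by rw [degreeRep_digits hi (by omega), if_pos hji]⟩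
  · refine ⟨i * m + i, ?_⟩
    rw [degreeRep_digits (by omega) (by omega), if_neg (lt_irrefl i)]
    ring_nf
  · exact ⟨m * m + i, by simp [degreeRep]⟩

lemma degree_swapPoly [Nontrivial R] (hm : 2 ≤ m) {a b : ℕ} (h : b < a) :
    (swapPoly m a b : R[X]).degree = ↑(a * m + b) := by
  have hlt : a + b * m < a * m + b := by nlinarith
  rw [swapPoly, degree_add_eq_left_of_degree_lt, degree_X_pow]
  rw [degree_X_pow, degree_X_pow]
  exact_mod_cast hlt

lemma degree_degreeRep [Nontrivial R] (hm : 2 ≤ m) (d : ℕ) :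
    (degreeRep m d : R[X]).degree = d := by
  have h4 : 4 ≤ m * m := Nat.mul_le_mul hm hm
  unfold degreeRep
  split_ifs with hd hlt
  · rw [degree_sub_eq_left_of_degree_lt, degree_X_pow]
    rw [degree_X_pow, degree_X_pow]
    exact_mod_cast (by omega : d - m * m + 1 < d)
  · rw [degree_swapPoly hm hlt, Nat.div_add_mod']
  · exact degree_X_pow d

lemma linearIndependent_basisSet [IsDomain R] (hm : 2 ≤ m) :
    LinearIndependent R (fun v : (basisSet m : Set R[X]) => (v : R[X])) :=
  let S : Sequence R := ⟨degreeRep m, degree_degreeRep hm⟩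
  S.linearIndependent.linearIndepOn_id.mono basisSet_subset_range_degreeRep

end SwapPoly

section Wn

open FiniteField

variable {K : Type*} [Field K] [Fintype K] {n : ℕ}

lemma add_pow_card_pow_mem_Wn {g : K[X]} (hg : g ∈ A0 K) :
    g + g ^ Fintype.card K ^ n ∈ Wn K n := by
  have h := comp_mem_TSp_singleton (X + X ^ Fintype.card K ^ n) hg
  rw [add_comp, X_comp, X_pow_comp] at h
  exact Submodule.mem_sup_left h

lemma pow_card_pow_succ_mem_Wn {g : K[X]} (hg : g ∈ A0 K) :
    g ^ (Fintype.card K ^ n + 1) ∈ Wn K n := by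
  have h := comp_mem_TSp_singleton (X ^ (Fintype.card K ^ n + 1)) hg
  rw [X_pow_comp] at h
  exact Submodule.mem_sup_right h

lemma swapPoly_mem_Wn {a b : ℕ} (hab : a + b ≠ 0) :
    swapPoly (Fintype.card K ^ n) a b ∈ Wn K n := by
  wlog ha : a ≠ 0 generalizing a b
  · rw [swapPoly_comm]
    exact this (by omega) (by omega)
  set m := Fintype.card K ^ n
  have hXa := X_pow_mem_A0_s5 (K := K) ha
  rcases eq_or_ne b 0 with rfl | hb
  · have e : (swapPoly m a 0 : K[X]) = X ^ a + (X ^ a) ^ m := by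
      rw [swapPoly, ← pow_mul]
      ring_nf
    rw [e]
    exact add_pow_card_pow_mem_Wn hXa
  · have hXb := X_pow_mem_A0_s5 (K := K) hb
    have hfrob : ((X : K[X]) ^ a + X ^ b) ^ m = (X ^ a) ^ m + (X ^ b) ^ m := by
      simpa only [frobeniusAlgHom_pow_apply] using
        map_add (frobeniusAlgHom K K[X] ^ n) (X ^ a) (X ^ b)
    have e : (swapPoly m a b : K[X]) =
        (X ^ a + X ^ b) ^ (m + 1) - (X ^ a) ^ (m + 1) - (X ^ b) ^ (m + 1) := by
      rw [pow_succ, hfrob, swapPoly]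
      ring_nf
    rw [e]
    exact sub_mem (sub_mem (pow_card_pow_succ_mem_Wn (add_mem hXa hXb))
      (pow_card_pow_succ_mem_Wn hXa)) (pow_card_pow_succ_mem_Wn hXb)

lemma span_basisSet_le_Wn : Submodule.span K (basisSet (Fintype.card K ^ n)) ≤ Wn K n := by
  set m := Fintype.card K ^ n
  have hm : m ≠ 0 := pow_ne_zero _ Fintype.card_ne_zero
  refine Submodule.span_le.2 ?_
  rintro _ ((⟨i, j, hji, -, rfl⟩ | ⟨i, hi, -, rfl⟩) | ⟨i, rfl⟩)
  · exact swapPoly_mem_Wn (by omega)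
  · rw [mul_comm, pow_mul]
    exact pow_card_pow_succ_mem_Wn (X_pow_mem_A0_s5 (by omega))
  · have e : (X : K[X]) ^ (m * m + i) - X ^ (i + 1) =
        swapPoly m (0 + m) i - swapPoly m 0 (i + 1) := by
      rw [swapPoly_add_left]
      simp
    change (X : K[X]) ^ (m * m + i) - X ^ (i + 1) ∈ Wn K n
    rw [e]
    exact sub_mem (swapPoly_mem_Wn (by omega)) (swapPoly_mem_Wn (by omega))

lemma add_pow_card_pow_mem_span_basisSet (hm : 2 ≤ Fintype.card K ^ n) {g : K[X]}
    (hg : g ∈ A0 K) :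
    g + g ^ Fintype.card K ^ n ∈ Submodule.span K (basisSet (Fintype.card K ^ n)) := by
  have h := map_mem_of_forall_X_pow_mem (LinearMap.id + (frobeniusAlgHom K K[X] ^ n).toLinearMap)
    (V := Submodule.span K (basisSet (Fintype.card K ^ n))) (fun i => by
      simpa [swapPoly, frobeniusAlgHom_pow_apply, ← pow_mul] using
        swapPoly_mem_span_basisSet (R := K) hm (a := 0) (b := i + 1) (by omega)) hg
  simpa [frobeniusAlgHom_pow_apply] using h

lemma mul_pow_add_mul_pow_mem_span_basisSet (hm : 2 ≤ Fintype.card K ^ n) {g h : K[X]}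
    (hg : g ∈ A0 K) (hh : h ∈ A0 K) :
    g * h ^ Fintype.card K ^ n + h * g ^ Fintype.card K ^ n ∈
      Submodule.span K (basisSet (Fintype.card K ^ n)) := by
  let B := (LinearMap.mul K K[X]).compl₂ (frobeniusAlgHom K K[X] ^ n).toLinearMap
  have h := map₂_mem_of_forall_X_pow_mem (B + B.flip)
    (V := Submodule.span K (basisSet (Fintype.card K ^ n))) (fun i j => by
      convert swapPoly_mem_span_basisSet (R := K) hm (a := j + 1) (b := i + 1) (by omega) using 1
      simp only [B, swapPoly, LinearMap.add_apply, LinearMap.flip_apply, LinearMap.compl₂_apply,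
        LinearMap.mul_apply', AlgHom.toLinearMap_apply, frobeniusAlgHom_pow_apply, ← pow_mul,
        ← pow_add]
      ring_nf) hg hh
  simpa [B, frobeniusAlgHom_pow_apply] using h

lemma pow_card_pow_succ_mem_span_basisSet (hm : 2 ≤ Fintype.card K ^ n) {g : K[X]}
    (hg : g ∈ A0 K) :
    g ^ (Fintype.card K ^ n + 1) ∈ Submodule.span K (basisSet (Fintype.card K ^ n)) := by
  set m := Fintype.card K ^ n
  rw [A0_eq_span_X_pow] at hg
  induction hg using Submodule.span_induction with
  | mem _ hp =>
    obtain ⟨i, rfl⟩ := hp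
    rw [← pow_mul, mul_comm]
    exact X_pow_succ_mul_mem_span_basisSet hm i.succ_ne_zero
  | zero => simp
  | add f g hf hg ihf ihg =>
    have hfrob : (f + g) ^ m = f ^ m + g ^ m := by
      simpa only [frobeniusAlgHom_pow_apply] using map_add (frobeniusAlgHom K K[X] ^ n) f g
    have e : (f + g) ^ (m + 1) = f ^ (m + 1) + g ^ (m + 1) + (f * g ^ m + g * f ^ m) := by
      rw [pow_succ, pow_succ, pow_succ, hfrob]
      ring
    rw [← A0_eq_span_X_pow] at hf hg
    rw [e]
    exact add_mem (add_mem ihf ihg) (mul_pow_add_mul_pow_mem_span_basisSet hm hf hg)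
  | smul c f _ ih =>
    rw [_root_.smul_pow]
    exact Submodule.smul_mem _ _ ih

lemma Wn_le_span_basisSet (hm : 2 ≤ Fintype.card K ^ n) :
    Wn K n ≤ Submodule.span K (basisSet (Fintype.card K ^ n)) := by
  refine sup_le (TSp_singleton_le (add_mem X_mem_A0 (X_pow_mem_A0_s5 (by omega))) fun g hg => ?_)
    (TSp_singleton_le (X_pow_mem_A0_s5 (by omega)) fun g hg => ?_)
  · rw [add_comp, X_comp, X_pow_comp]
    exact add_pow_card_pow_mem_span_basisSet hm hg
  · rw [X_pow_comp]
    exact pow_card_pow_succ_mem_span_basisSet hm hg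

lemma En_union_eq_basisSet (n : ℕ) :
    En K n ∪ {f | ∃ i : ℕ, f = (X ^ (Fintype.card K ^ (2 * n)) - X) * X ^ i} =
      basisSet (Fintype.card K ^ n) := by
  rw [basisSet, En]
  congr 1
  ext f
  refine exists_congr fun i => ?_
  rw [pow_mul', sq, eq_comm]
  ring_nf

end Wn

/-- For each `n ≥ 1`, the set `E_n ∪ {(x^{q^{2n}} - x) x^i : i ≥ 0}` is a
`k`-linear basis of `W_n`. -/
theorem basis_Wn (n : ℕ) (hn : 1 ≤ n) :
    LinearIndependent k
      (fun v : ↥(En k n ∪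
          {f | ∃ i : ℕ, f = (X ^ (Fintype.card k ^ (2 * n)) - X) * X ^ i}) =>
        (v : Polynomial k)) ∧
    Submodule.span k (En k n ∪
        {f | ∃ i : ℕ, f = (X ^ (Fintype.card k ^ (2 * n)) - X) * X ^ i}) = Wn k n := by
  have hm : 2 ≤ Fintype.card k ^ n := Nat.one_lt_pow (by omega) Fintype.one_lt_card
  rw [En_union_eq_basisSet]
  exact ⟨linearIndependent_basisSet hm,
    le_antisymm span_basisSet_le_Wn (Wn_le_span_basisSet hm)⟩
end
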